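/- arXiv:2407.01028 — 3 statements merged into one kernel-verified Lean document; each statement's English description precedes it below -/
import Mathlib

section
/- For complex ν with Re ν < 0 and any complex z, the Hermite function satisfies H_ν(z) = (1/Γ(-ν)) ∫_0^∞ e^{-t² - 2tz} t^{-ν-1} dt, where the integral converges absolutely. -/
open Complex MeasureTheory Set

noncomputable section

/-- `ω = e^{iπ/4}`. -/
def ω : ℂ := Complex.exp (Real.pi * Complex.I / 4)

/-- Hermite function of complex order `ν`, defined by its power series
(Lebedev (10.4.3)): `H_ν(z) = (1/(2Γ(-ν))) Σ_n Γ((n-ν)/2)(-2z)^n/n!`. -/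
def HermiteF (ν z : ℂ) : ℂ :=
  (1 / (2 * Complex.Gamma (-ν))) *
    ∑' n : ℕ, Complex.Gamma (((n : ℂ) - ν) / 2) * (-2 * z) ^ n / (Nat.factorial n : ℂ)

/-- Riemann's auxiliary function `ℛ(s) = ∫_{0↙1} x^{-s} e^{πix²}/(e^{πix}-e^{-πix}) dx`,
with the path parametrized as `x = 1/2 - ω u`, `u ∈ ℝ`, so `dx = -ω du`. -/
def RiemannR (s : ℂ) : ℂ :=
  ∫ u : ℝ, (-ω) * ((1 / 2 - ω * u) ^ (-s) *
      Complex.exp (Real.pi * Complex.I * (1 / 2 - ω * u) ^ 2) /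
    (Complex.exp (Real.pi * Complex.I * (1 / 2 - ω * u)) -
      Complex.exp (-(Real.pi : ℂ) * Complex.I * (1 / 2 - ω * u))))

/-- Parabolic cylinder function `U(a,z)`, expressed through the Hermite function via
`U(-ν-1/2,z) = 2^{-ν/2} e^{-z²/4} H_ν(z/√2)`. -/
def cylinderU (a z : ℂ) : ℂ :=
  (2 : ℂ) ^ (a / 2 + 1 / 4) * Complex.exp (-z ^ 2 / 4) *
    HermiteF (-a - 1 / 2) (z / (Real.sqrt 2 : ℂ))

/-- Whittaker's parabolic cylinder function `D_ν(z) = U(-ν-1/2, z)`. -/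
def whittakerD (ν z : ℂ) : ℂ := cylinderU (-ν - 1 / 2) z

/-!
Expand `e^{-2tz}` in its power series and integrate term by term: with `s = -ν`, the `n`-th
term gives the Mellin transform of the Gaussian, `∫₀^∞ e^{-t²} t^{n+s-1} dt = Γ((n+s)/2)/2`.
Dominated convergence justifies the interchange, since the absolute series sums to
`e^{-t²+2|z|t} t^{Re s-1}`, which is integrable because `-t² + 2|z|t ≤ 2|z|² - t²/2`.
-/

open Nat

theorem integral_cexp_neg_sq_mul_cpow {s : ℂ} (hs : 0 < s.re) :
    ∫ t in Ioi (0 : ℝ), cexp (-(t : ℂ) ^ 2) * (t : ℂ) ^ (s - 1) = Gamma (s / 2) / 2 := by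
  have h := mellin_comp_rpow (fun t : ℝ => ((Real.exp (-t) : ℝ) : ℂ)) s 2
  rw [← GammaIntegral_eq_mellin, ← Gamma_eq_integral (by simpa using half_pos hs)] at h
  rw [mellin] at h
  convert h using 1
  · refine setIntegral_congr_fun measurableSet_Ioi fun t _ => ?_
    simp [mul_comm]
  · norm_num [div_eq_inv_mul]

theorem integrableOn_exp_neg_sq_add_mul_mul_rpow {a : ℝ} (ha : 0 < a) (c : ℝ) :
    IntegrableOn (fun t : ℝ => Real.exp (-t ^ 2 + c * t) * t ^ (a - 1)) (Ioi 0) := by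
  have hdom := (integrableOn_rpow_mul_exp_neg_mul_sq (by norm_num : (0 : ℝ) < 1 / 2)
    (by linarith : (-1 : ℝ) < a - 1)).const_mul (Real.exp (c ^ 2 / 2))
  refine hdom.mono' (by fun_prop) ((ae_restrict_iff' measurableSet_Ioi).mpr (ae_of_all _ ?_))
  intro t (ht : 0 < t)
  have hquad : -t ^ 2 + c * t ≤ c ^ 2 / 2 + -(1 / 2) * t ^ 2 := by nlinarith [sq_nonneg (t - c)]
  calc ‖Real.exp (-t ^ 2 + c * t) * t ^ (a - 1)‖
      = Real.exp (-t ^ 2 + c * t) * t ^ (a - 1) := Real.norm_of_nonneg (by positivity)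
    _ ≤ Real.exp (c ^ 2 / 2 + -(1 / 2) * t ^ 2) * t ^ (a - 1) := by gcongr
    _ = _ := by rw [Real.exp_add]; ring

theorem norm_cexp_neg_sq_sub_mul_mul_cpow (s z : ℂ) {t : ℝ} (ht : 0 < t) :
    ‖cexp (-(t : ℂ) ^ 2 - 2 * t * z) * (t : ℂ) ^ (s - 1)‖ =
      Real.exp (-t ^ 2 + -2 * z.re * t) * t ^ (s.re - 1) := by
  have hre : (-(t : ℂ) ^ 2 - 2 * t * z).re = -t ^ 2 + -2 * z.re * t := by
    simp [← ofReal_pow]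
    ring
  rw [norm_mul, norm_exp, norm_cpow_eq_rpow_re_of_pos ht, hre, sub_re, one_re]

theorem integrableOn_cexp_neg_sq_sub_mul_mul_cpow {s : ℂ} (hs : 0 < s.re) (z : ℂ) :
    IntegrableOn (fun t : ℝ => cexp (-(t : ℂ) ^ 2 - 2 * t * z) * (t : ℂ) ^ (s - 1)) (Ioi 0) :=
  (integrableOn_exp_neg_sq_add_mul_mul_rpow hs (-2 * z.re)).mono' (by fun_prop)
    ((ae_restrict_iff' measurableSet_Ioi).mpr (ae_of_all _ fun _ ht =>
      (norm_cexp_neg_sq_sub_mul_mul_cpow s z ht).le))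

def hermiteTerm (s z : ℂ) (n : ℕ) (t : ℝ) : ℂ :=
  cexp (-(t : ℂ) ^ 2) * (t : ℂ) ^ (s - 1) * ((-2 * t * z) ^ n / n !)

section hermiteTerm

variable (s z : ℂ) (n : ℕ) {t : ℝ}

theorem hermiteTerm_eq_of_pos (ht : 0 < t) :
    hermiteTerm s z n t =
      (-2 * z) ^ n / n ! * (cexp (-(t : ℂ) ^ 2) * (t : ℂ) ^ ((n + s) - 1)) := by
  rw [hermiteTerm, add_comm, add_sub_right_comm, cpow_add _ _ (ofReal_ne_zero.2 ht.ne'),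
    cpow_natCast]
  ring

theorem norm_hermiteTerm (ht : 0 < t) :
    ‖hermiteTerm s z n t‖ =
      Real.exp (-t ^ 2) * t ^ (s.re - 1) * ((2 * ‖z‖ * t) ^ n / n !) := by
  have hnorm : ‖-2 * (t : ℂ) * z‖ = 2 * ‖z‖ * t := by
    simp [abs_of_pos ht]
    ring
  rw [hermiteTerm, norm_mul, norm_mul, norm_div, norm_pow, hnorm, norm_exp,
    norm_cpow_eq_rpow_re_of_pos ht, norm_natCast, sub_re, one_re, ← ofReal_pow, ← ofReal_neg,
    ofReal_re]

theorem hasSum_hermiteTerm (t : ℝ) :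
    HasSum (fun n => hermiteTerm s z n t)
      (cexp (-(t : ℂ) ^ 2 - 2 * t * z) * (t : ℂ) ^ (s - 1)) := by
  have hexp := NormedSpace.expSeries_div_hasSum_exp (-2 * t * z)
  rw [← exp_eq_exp_ℂ] at hexp
  rw [sub_eq_add_neg, exp_add, mul_right_comm, ← neg_mul, ← neg_mul]
  exact hexp.mul_left _

theorem integral_hermiteTerm (hs : 0 < s.re) :
    ∫ t in Ioi (0 : ℝ), hermiteTerm s z n t = Gamma ((n + s) / 2) * (-2 * z) ^ n / n ! / 2 := by
  rw [setIntegral_congr_fun measurableSet_Ioi fun t ht => hermiteTerm_eq_of_pos s z n ht,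
    integral_const_mul, integral_cexp_neg_sq_mul_cpow (by simp; positivity)]
  ring

end hermiteTerm

theorem hasSum_integral_cexp_neg_sq_sub_mul_mul_cpow {s : ℂ} (hs : 0 < s.re) (z : ℂ) :
    HasSum (fun n : ℕ => Gamma ((n + s) / 2) * (-2 * z) ^ n / n ! / 2)
      (∫ t in Ioi (0 : ℝ), cexp (-(t : ℂ) ^ 2 - 2 * t * z) * (t : ℂ) ^ (s - 1)) := by
  have hbound (t : ℝ) : HasSum (fun n : ℕ => Real.exp (-t ^ 2) * t ^ (s.re - 1) *
      ((2 * ‖z‖ * t) ^ n / n !)) (Real.exp (-t ^ 2 + 2 * ‖z‖ * t) * t ^ (s.re - 1)) := by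
    have hexp := NormedSpace.expSeries_div_hasSum_exp (2 * ‖z‖ * t)
    rw [← Real.exp_eq_exp_ℝ] at hexp
    rw [Real.exp_add, mul_right_comm (Real.exp _)]
    exact hexp.mul_left _
  simp_rw [← integral_hermiteTerm s z _ hs]
  have hmeas (n : ℕ) : Measurable (hermiteTerm s z n) := by
    unfold hermiteTerm
    fun_prop
  refine hasSum_integral_of_dominated_convergence _ (fun n => (hmeas n).aestronglyMeasurable)
    (fun n => (ae_restrict_iff' measurableSet_Ioi).mpr
      (ae_of_all _ fun t ht => (norm_hermiteTerm s z n ht).le))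
    (ae_of_all _ fun t => (hbound t).summable) ?_ (ae_of_all _ (hasSum_hermiteTerm s z))
  simp_rw [(hbound _).tsum_eq]
  exact integrableOn_exp_neg_sq_add_mul_mul_rpow hs _

theorem hermite_integral_rep (ν z : ℂ) (hν : ν.re < 0) :
    IntegrableOn (fun t : ℝ =>
      Complex.exp (-(t : ℂ) ^ 2 - 2 * t * z) * (t : ℂ) ^ (-ν - 1)) (Ioi 0) ∧
    HermiteF ν z = (1 / Complex.Gamma (-ν)) *
      ∫ t in Ioi (0 : ℝ), Complex.exp (-(t : ℂ) ^ 2 - 2 * t * z) * (t : ℂ) ^ (-ν - 1) := by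
  have hs : 0 < (-ν).re := by simpa using hν
  refine ⟨integrableOn_cexp_neg_sq_sub_mul_mul_cpow hs z, ?_⟩
  rw [← (hasSum_integral_cexp_neg_sq_sub_mul_mul_cpow hs z).tsum_eq, tsum_div_const]
  simp_rw [← sub_eq_add_neg]
  rw [HermiteF]
  ring
end
end

section
/- Let ω = e^{iπ/4} and fix R > 0. For s with |s| ≤ R, the function of (u, v) ∈ ℝ² given by -i x^{-s} e^{πix² - xζ}/(1 + e^{-ζ}), where x = 1/2 - ωu and ζ = ωv, is absolutely integrable over ℝ², being bounded by C_R (1+|u|)^R e^{-πu² + πu/√2} · e^{-v/(2√2)}/max(e^{-v/√2} - 1, 1). -/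
open Complex MeasureTheory Set

noncomputable section

/-!
Write `x = 1/2 - ωu` and `ζ = ωv`. The modulus of `exp(πix² - xζ)` is
`exp(-πu² + πu/√2 - v/(2√2))`, and since `1/3 ≤ |x| ≤ 1 + |u|` the power satisfies
`|x^{-s}| ≤ e^{π|s|} (3(1 + |u|))^{|s|}`. For the denominator write `e^{-ζ} = w = e^{-t(1+i)}` with
`t = v/√2`: for `t < -π/2` use `|1 + w| ≥ |w| - 1`, for `|t| ≤ π/2` use `Re(1 + w) ≥ 1` (as
`cos t ≥ 0`), and for `t > π/2` use `|1 + w| ≥ 1 - |w|`; in all cases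
`|1 + w| ≥ e^{-π/2} max(e^{-t} - 1, 1)`. The resulting majorant is a product of a function of `u`
with Gaussian decay and a function of `v` decaying like `e^{-|v|/(2√2)}`, hence integrable on `ℝ²`.
-/

open scoped Real

lemma norm_cpow_le_exp_mul_rpow {z s : ℂ} {R M : ℝ} (hz : z ≠ 0) (hs : ‖s‖ ≤ R)
    (hM : ‖z‖ ≤ M) (hM' : ‖z‖⁻¹ ≤ M) : ‖z ^ s‖ ≤ rexp (π * R) * M ^ R := by
  have hz' : 0 < ‖z‖ := norm_pos_iff.2 hz
  have hlog : |Real.log ‖z‖| ≤ Real.log M := by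
    refine abs_le.2 ⟨?_, Real.log_le_log hz' hM⟩
    rw [neg_le, ← Real.log_inv]
    exact Real.log_le_log (inv_pos.2 hz') hM'
  have hnorm_log : ‖log z‖ ≤ Real.log M + π := by
    calc ‖log z‖ ≤ |(log z).re| + |(log z).im| := norm_le_abs_re_add_abs_im _
      _ ≤ Real.log M + π := by
        rw [log_re, log_im]; exact add_le_add hlog (abs_arg_le_pi z)
  calc ‖z ^ s‖ = rexp (log z * s).re := by rw [cpow_def_of_ne_zero hz, norm_exp]
    _ ≤ rexp ((Real.log M + π) * R) := by
        gcongr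
        calc (log z * s).re ≤ ‖log z * s‖ := re_le_norm _
          _ = ‖log z‖ * ‖s‖ := norm_mul _ _
          _ ≤ (Real.log M + π) * R := by
            gcongr
            linarith [abs_nonneg (Real.log ‖z‖), Real.pi_pos]
    _ = rexp (π * R) * M ^ R := by
        rw [Real.rpow_def_of_pos (hz'.trans_le hM), ← Real.exp_add]; ring_nf

lemma two_le_exp_pi_div_two : 2 ≤ rexp (π / 2) := by
  linarith [Real.add_one_le_exp (π / 2), Real.pi_gt_three]

lemma norm_one_add_exp_neg_mul_one_add_I_ge (t : ℝ) :
    rexp (-(π / 2)) * max (rexp (-t) - 1) 1 ≤ ‖1 + cexp (-(t * (1 + I)))‖ := by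
  set w := cexp (-(t * (1 + I)))
  have hw : ‖w‖ = rexp (-t) := by simp [w, norm_exp]
  have hre : (1 + w).re = 1 + rexp (-t) * Real.cos t := by simp [w, exp_re]
  have hexp_half : rexp (-(π / 2)) ≤ 1 / 2 := by
    rw [Real.exp_neg, inv_le_comm₀ (Real.exp_pos _) (by norm_num)]
    linarith [two_le_exp_pi_div_two]
  have hlower : rexp (-t) - 1 ≤ ‖1 + w‖ := by
    simpa [hw, add_comm] using norm_sub_norm_le w (-1)
  have hupper : 1 - rexp (-t) ≤ ‖1 + w‖ := by
    simpa [hw] using norm_sub_norm_le (1 : ℂ) (-w)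
  rcases lt_or_ge t (-(π / 2)) with ht | ht
  · have h2 : 2 ≤ rexp (-t) :=
      two_le_exp_pi_div_two.trans (Real.exp_le_exp.2 (by linarith))
    rw [max_eq_left (by linarith)]
    nlinarith [Real.exp_pos (-(π / 2))]
  rcases le_or_gt t (π / 2) with ht' | ht'
  · have hcos : 0 ≤ Real.cos t := Real.cos_nonneg_of_neg_pi_div_two_le_of_le ht ht'
    have hmax : max (rexp (-t) - 1) 1 ≤ rexp (π / 2) :=
      max_le (by linarith [Real.exp_le_exp.2 (show -t ≤ π / 2 by linarith)])
        (Real.one_le_exp (by positivity))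
    calc rexp (-(π / 2)) * max (rexp (-t) - 1) 1 ≤ rexp (-(π / 2)) * rexp (π / 2) :=
          mul_le_mul_of_nonneg_left hmax (Real.exp_pos _).le
      _ = 1 := by rw [← Real.exp_add]; simp
      _ ≤ (1 + w).re := by rw [hre]; nlinarith [Real.exp_pos (-t)]
      _ ≤ ‖1 + w‖ := re_le_norm _
  · have hexp_t : rexp (-t) ≤ rexp (-(π / 2)) := Real.exp_le_exp.2 (by linarith)
    rw [max_eq_right (by linarith)]
    linarith

lemma integrable_exp_neg_mul_abs {c : ℝ} (hc : 0 < c) :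
    Integrable fun x : ℝ => rexp (-c * |x|) := by
  have hIic : IntegrableOn (fun x : ℝ => rexp (-c * |x|)) (Iic 0) :=
    (integrableOn_exp_mul_Iic hc 0).congr_fun
      (fun x hx => by rw [abs_of_nonpos hx]; ring_nf) measurableSet_Iic
  have hIoi : IntegrableOn (fun x : ℝ => rexp (-c * |x|)) (Ioi 0) :=
    (integrableOn_exp_mul_Ioi (neg_neg_of_pos hc) 0).congr_fun
      (fun x hx => by rw [abs_of_pos hx]) measurableSet_Ioi
  simpa using hIic.union hIoi

lemma exp_div_max_le (c v : ℝ) :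
    rexp (-v / (2 * c)) / max (rexp (-v / c) - 1) 1 ≤ 2 * rexp (-(2 * c)⁻¹ * |v|) := by
  have hmax : 1 ≤ max (rexp (-v / c) - 1) 1 := le_max_right _ _
  rw [div_le_iff₀ (by linarith)]
  rcases le_total 0 v with hv | hv
  · have : rexp (-v / (2 * c)) = rexp (-(2 * c)⁻¹ * |v|) := by
      rw [abs_of_nonneg hv]; ring_nf
    nlinarith [Real.exp_pos (-(2 * c)⁻¹ * |v|)]
  · have hsplit : rexp (-v / (2 * c)) = rexp (-(2 * c)⁻¹ * |v|) * rexp (-v / c) := by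
      rw [← Real.exp_add, abs_of_nonpos hv]; ring_nf
    have : rexp (-v / c) ≤ 2 * max (rexp (-v / c) - 1) 1 := by
      linarith [le_max_left (rexp (-v / c) - 1) 1]
    rw [hsplit]
    nlinarith [Real.exp_pos (-(2 * c)⁻¹ * |v|)]

lemma integrable_exp_div_max {c : ℝ} (hc : 0 < c) :
    Integrable fun v : ℝ => rexp (-v / (2 * c)) / max (rexp (-v / c) - 1) 1 := by
  refine ((integrable_exp_neg_mul_abs (inv_pos.2 (mul_pos two_pos hc))).const_mul 2).mono'
    (by fun_prop : Measurable _).aestronglyMeasurable (ae_of_all _ fun v => ?_)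
  rw [Real.norm_of_nonneg (by positivity)]
  exact exp_div_max_le c v

lemma one_add_abs_rpow_mul_exp_le {a R : ℝ} (ha : 0 < a) (hR : 0 ≤ R) (b u : ℝ) :
    (1 + |u|) ^ R * rexp (-a * u ^ 2 + b * u) ≤
      rexp ((R + |b|) ^ 2 / (2 * a)) * rexp (-(a / 2) * u ^ 2) := by
  have hpow : (1 + |u|) ^ R ≤ rexp (R * |u|) := by
    calc (1 + |u|) ^ R ≤ rexp |u| ^ R := by
          gcongr; linarith [Real.add_one_le_exp |u|]
      _ = rexp (R * |u|) := by rw [← Real.exp_mul, mul_comm]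
  have hbu : b * u ≤ |b| * |u| := by rw [← abs_mul]; exact le_abs_self _
  -- AM-GM
  have hamgm : (R + |b|) * |u| ≤ a / 2 * u ^ 2 + (R + |b|) ^ 2 / (2 * a) := by
    have hsq : a / 2 * u ^ 2 + (R + |b|) ^ 2 / (2 * a) - (R + |b|) * |u|
        = (a * |u| - (R + |b|)) ^ 2 / (2 * a) := by
      rw [← sq_abs u]; field_simp; ring
    have : 0 ≤ (a * |u| - (R + |b|)) ^ 2 / (2 * a) := by positivity
    linarith
  calc (1 + |u|) ^ R * rexp (-a * u ^ 2 + b * u)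
      ≤ rexp (R * |u|) * rexp (-a * u ^ 2 + b * u) := by gcongr
    _ ≤ rexp ((R + |b|) ^ 2 / (2 * a)) * rexp (-(a / 2) * u ^ 2) := by
        rw [← Real.exp_add, ← Real.exp_add]; exact Real.exp_le_exp.2 (by linarith)

lemma integrable_one_add_abs_rpow_mul_exp {a R : ℝ} (ha : 0 < a) (hR : 0 ≤ R) (b : ℝ) :
    Integrable fun u : ℝ => (1 + |u|) ^ R * rexp (-a * u ^ 2 + b * u) := by
  refine ((integrable_exp_neg_mul_sq (half_pos ha)).const_mul
    (rexp ((R + |b|) ^ 2 / (2 * a)))).mono'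
    (by fun_prop : Measurable _).aestronglyMeasurable (ae_of_all _ fun u => ?_)
  rw [Real.norm_of_nonneg (by positivity)]
  exact one_add_abs_rpow_mul_exp_le ha hR b u

def doubleIntegrand (s : ℂ) (u v : ℝ) : ℂ :=
  -I * ((1 / 2 - ω * u) ^ (-s) *
    cexp (π * I * (1 / 2 - ω * u) ^ 2 - (1 / 2 - ω * u) * (ω * v)) / (1 + cexp (-(ω * v))))

lemma ω_eq_inv_sqrt_two_mul : ω = ((√2)⁻¹ : ℝ) * (1 + I) := by
  have h : (√2)⁻¹ = √2 / 2 := by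
    field_simp; rw [Real.sq_sqrt (by norm_num : (0:ℝ) ≤ 2)]
  rw [ω, show (π : ℂ) * I / 4 = ((π / 4 : ℝ) : ℂ) * I by push_cast; ring, exp_mul_I,
    ← ofReal_cos, ← ofReal_sin, Real.cos_pi_div_four, Real.sin_pi_div_four, h]
  push_cast; ring

lemma ω_mul_ofReal (v : ℝ) : ω * v = ((v / √2 : ℝ) : ℂ) * (1 + I) := by
  rw [ω_eq_inv_sqrt_two_mul]; push_cast; ring

lemma norm_ω : ‖ω‖ = 1 := by
  rw [ω, norm_exp]; simp

lemma re_doubleIntegrand_exponent (u v : ℝ) :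
    (π * I * (1 / 2 - ω * u) ^ 2 - (1 / 2 - ω * u) * (ω * v)).re =
      (-π * u ^ 2 + π * u / √2) + -v / (2 * √2) := by
  have h2 : √2 ^ 2 = 2 := Real.sq_sqrt (by norm_num)
  rw [ω_eq_inv_sqrt_two_mul]
  simp only [sq, sub_re, mul_re, mul_im, sub_im, ofReal_re, ofReal_im, I_re, I_im, add_re, add_im,
    one_re, one_im, div_re, div_im]
  norm_num
  field_simp
  linear_combination 2 * π * u ^ 2 * h2

lemma norm_half_sub_ω_mul_ge (u : ℝ) : 1 / 3 ≤ ‖1 / 2 - ω * u‖ := by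
  have h2 : √2 ^ 2 = 2 := Real.sq_sqrt (by norm_num)
  have hsq : 1 / 9 ≤ ‖1 / 2 - ω * u‖ ^ 2 := by
    rw [Complex.sq_norm, ω_eq_inv_sqrt_two_mul, normSq_apply]
    simp only [sub_re, sub_im, mul_re, mul_im, ofReal_re, ofReal_im, add_re, add_im, one_re, one_im,
      I_re, I_im, div_re, div_im]
    norm_num
    field_simp
    nlinarith [sq_nonneg (4 * u - √2)]
  nlinarith [norm_nonneg (1 / 2 - ω * u)]

lemma norm_half_sub_ω_mul_le (u : ℝ) : ‖1 / 2 - ω * u‖ ≤ 1 / 2 + |u| := by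
  calc ‖1 / 2 - ω * u‖ ≤ ‖(1 / 2 : ℂ)‖ + ‖ω * u‖ := norm_sub_le _ _
    _ = 1 / 2 + |u| := by rw [norm_mul, norm_ω, one_mul, norm_real, Real.norm_eq_abs]; norm_num

lemma norm_half_sub_ω_mul_cpow_le {R : ℝ} {s : ℂ} (hs : ‖s‖ ≤ R) (u : ℝ) :
    ‖(1 / 2 - ω * u) ^ s‖ ≤ rexp (π * R) * 3 ^ R * (1 + |u|) ^ R := by
  have hlow := norm_half_sub_ω_mul_ge u
  have hx : (1 / 2 - ω * u) ≠ 0 := norm_pos_iff.1 (by linarith)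
  have hinv : ‖1 / 2 - ω * u‖⁻¹ ≤ 3 := by
    rw [inv_le_comm₀ (by linarith) three_pos]; linarith
  rw [mul_assoc, ← Real.mul_rpow zero_le_three (by positivity)]
  refine norm_cpow_le_exp_mul_rpow hx hs ?_ ?_
  · linarith [norm_half_sub_ω_mul_le u, abs_nonneg u]
  · nlinarith [abs_nonneg u]

lemma norm_one_add_exp_neg_ω_mul_ge (v : ℝ) :
    rexp (-(π / 2)) * max (rexp (-v / √2) - 1) 1 ≤ ‖1 + cexp (-(ω * v))‖ := by
  rw [ω_mul_ofReal, neg_div]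
  exact norm_one_add_exp_neg_mul_one_add_I_ge _

lemma norm_doubleIntegrand_le {R : ℝ} {s : ℂ} (hs : ‖s‖ ≤ R) (u v : ℝ) :
    ‖doubleIntegrand s u v‖ ≤ rexp (π * R + π / 2) * 3 ^ R *
      ((1 + |u|) ^ R * rexp (-π * u ^ 2 + π * u / √2) *
        (rexp (-v / (2 * √2)) / max (rexp (-v / √2) - 1) 1)) := by
  have hnum := norm_half_sub_ω_mul_cpow_le (R := R) (s := -s) (by rwa [norm_neg]) u
  have hexp : ‖cexp (π * I * (1 / 2 - ω * u) ^ 2 - (1 / 2 - ω * u) * (ω * v))‖ =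
      rexp (-π * u ^ 2 + π * u / √2) * rexp (-v / (2 * √2)) := by
    rw [norm_exp, re_doubleIntegrand_exponent, Real.exp_add]
  have hden := norm_one_add_exp_neg_ω_mul_ge v
  rw [doubleIntegrand, norm_mul, norm_neg, norm_I, one_mul, norm_div, norm_mul, hexp]
  calc _ ≤ rexp (π * R) * 3 ^ R * (1 + |u|) ^ R *
          (rexp (-π * u ^ 2 + π * u / √2) * rexp (-v / (2 * √2))) /
          (rexp (-(π / 2)) * max (rexp (-v / √2) - 1) 1) := by
        gcongr
    _ = _ := by
        rw [Real.exp_add (π * R), Real.exp_neg]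
        field_simp

lemma integrable_doubleIntegrand {R : ℝ} {s : ℂ} (hs : ‖s‖ ≤ R) :
    Integrable fun p : ℝ × ℝ => doubleIntegrand s p.1 p.2 := by
  have hR : 0 ≤ R := (norm_nonneg s).trans hs
  have hu := integrable_one_add_abs_rpow_mul_exp Real.pi_pos hR (π / √2)
  have hv := integrable_exp_div_max (c := √2) (by positivity)
  refine ((hu.mul_prod hv).const_mul (rexp (π * R + π / 2) * 3 ^ R)).mono'
    (by unfold doubleIntegrand; fun_prop : Measurable _).aestronglyMeasurable
    (ae_of_all _ fun p => ?_)
  simpa only [mul_div_right_comm] using norm_doubleIntegrand_le hs p.1 p.2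

theorem double_integrand_bound_general (R : ℝ) :
    ∃ C > 0, ∀ s : ℂ, ‖s‖ ≤ R →
      Integrable (fun p : ℝ × ℝ =>
        -Complex.I * ((1 / 2 - ω * p.1) ^ (-s) *
          Complex.exp (Real.pi * Complex.I * (1 / 2 - ω * p.1) ^ 2 -
            (1 / 2 - ω * p.1) * (ω * p.2)) / (1 + Complex.exp (-(ω * p.2))))) ∧
      ∀ u v : ℝ,
        ‖-Complex.I * ((1 / 2 - ω * u) ^ (-s) *
          Complex.exp (Real.pi * Complex.I * (1 / 2 - ω * u) ^ 2 -
            (1 / 2 - ω * u) * (ω * v)) / (1 + Complex.exp (-(ω * v))))‖ ≤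
        C * (1 + |u|) ^ R * Real.exp (-Real.pi * u ^ 2 + Real.pi * u / Real.sqrt 2) *
          (Real.exp (-v / (2 * Real.sqrt 2)) / max (Real.exp (-v / Real.sqrt 2) - 1) 1) := by
  refine ⟨rexp (π * R + π / 2) * 3 ^ R, by positivity, fun s hs =>
    ⟨integrable_doubleIntegrand hs, fun u v => ?_⟩⟩
  exact (norm_doubleIntegrand_le hs u v).trans_eq (by ring)

theorem double_integrand_bound (R : ℝ) (hR : 0 < R) :
    ∃ C > 0, ∀ s : ℂ, ‖s‖ ≤ R →
      Integrable (fun p : ℝ × ℝ =>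
        -Complex.I * ((1 / 2 - ω * p.1) ^ (-s) *
          Complex.exp (Real.pi * Complex.I * (1 / 2 - ω * p.1) ^ 2 -
            (1 / 2 - ω * p.1) * (ω * p.2)) / (1 + Complex.exp (-(ω * p.2))))) ∧
      ∀ u v : ℝ,
        ‖-Complex.I * ((1 / 2 - ω * u) ^ (-s) *
          Complex.exp (Real.pi * Complex.I * (1 / 2 - ω * u) ^ 2 -
            (1 / 2 - ω * u) * (ω * v)) / (1 + Complex.exp (-(ω * v))))‖ ≤
        C * (1 + |u|) ^ R * Real.exp (-Real.pi * u ^ 2 + Real.pi * u / Real.sqrt 2) *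
          (Real.exp (-v / (2 * Real.sqrt 2)) / max (Real.exp (-v / Real.sqrt 2) - 1) 1) :=
  double_integrand_bound_general R
end
end

section
/- For v ∈ ℝ and ω = e^{iπ/4}, one has |1 + e^{-ωv}| ≥ c · max(e^{-v/√2} - 1, 1) for some absolute constant c > 0; in particular 1 + e^{-ωv} never vanishes for real v. -/
open Complex MeasureTheory Set

noncomputable section

/-! The exponent `-ωv` equals `a(1 + i)` with `a = -v/√2`, so `z = e^{-ωv}` has modulus `e^a` and
argument `a`. The reverse triangle inequality gives `|1 + z| ≥ |e^a - 1|`, which is at least half of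
`max(e^a - 1, 1)` once `|a| ≥ 1`; for `|a| ≤ π/2` instead `Re z ≥ 0`, so `|1 + z| ≥ 1`. Hence `c = 1/2`. -/

theorem omega_eq : ω = ((√2 / 2 : ℝ) : ℂ) * (1 + I) := by
  rw [ω, show (Real.pi : ℂ) * I / 4 = ((Real.pi / 4 : ℝ) : ℂ) * I by push_cast; ring,
    exp_mul_I, ← ofReal_cos, ← ofReal_sin, Real.cos_pi_div_four, Real.sin_pi_div_four]
  ring

theorem neg_omega_mul_ofReal (v : ℝ) : -(ω * v) = ((-v / √2 : ℝ) : ℂ) * (1 + I) := by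
  have h2 : (√2 : ℂ) * √2 = 2 := by exact_mod_cast Real.mul_self_sqrt zero_le_two
  have hne : (√2 : ℂ) ≠ 0 := by exact_mod_cast (Real.sqrt_pos.mpr zero_lt_two).ne'
  rw [omega_eq]
  push_cast
  field_simp
  linear_combination (-(v : ℂ) * (1 + I)) * h2

theorem one_le_norm_one_add_of_re_nonneg {z : ℂ} (hz : 0 ≤ z.re) : 1 ≤ ‖1 + z‖ :=
  calc (1 : ℝ) ≤ (1 + z).re := by simp [hz]
    _ ≤ ‖1 + z‖ := re_le_norm _

theorem abs_norm_sub_one_le_norm_one_add (z : ℂ) : |‖z‖ - 1| ≤ ‖1 + z‖ := by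
  simpa [add_comm, norm_one] using abs_norm_sub_norm_le z (-1)

theorem half_max_exp_sub_one_le_abs {a : ℝ} (ha : 1 ≤ |a|) :
    1 / 2 * max (Real.exp a - 1) 1 ≤ |Real.exp a - 1| := by
  rcases le_abs'.mp ha with hneg | hpos
  · have hexp : 2 ≤ Real.exp (-a) := by linarith [Real.add_one_le_exp (-a)]
    have hinv : Real.exp a * Real.exp (-a) = 1 := by
      rw [← Real.exp_add, add_neg_cancel, Real.exp_zero]
    have hsmall : Real.exp a ≤ 1 / 2 := by nlinarith [Real.exp_pos a]
    rw [max_eq_right (by linarith), abs_of_neg (by linarith)]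
    linarith
  · have hbig : 2 ≤ Real.exp a := by linarith [Real.add_one_le_exp a]
    rw [max_eq_left (by linarith), abs_of_pos (by linarith)]
    linarith

theorem half_max_le_norm_one_add_exp_mul_one_add_I (a : ℝ) :
    1 / 2 * max (Real.exp a - 1) 1 ≤ ‖1 + exp (a * (1 + I))‖ := by
  set z := exp (a * (1 + I))
  have hnorm : ‖z‖ = Real.exp a := by simp [z, norm_exp]
  have hreverse : |Real.exp a - 1| ≤ ‖1 + z‖ := hnorm ▸ abs_norm_sub_one_le_norm_one_add z
  by_cases ha : |a| ≤ Real.pi / 2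
  · have hre : 0 ≤ z.re := by
      have hcos : 0 ≤ Real.cos a := Real.cos_nonneg_of_mem_Icc (abs_le.mp ha)
      simpa [z, exp_re] using mul_nonneg (Real.exp_pos a).le hcos
    have hone := one_le_norm_one_add_of_re_nonneg hre
    have hmax : max (Real.exp a - 1) 1 ≤ ‖1 + z‖ := max_le ((le_abs_self _).trans hreverse) hone
    linarith [le_max_right (Real.exp a - 1) 1]
  · have ha1 : 1 ≤ |a| := by linarith [Real.pi_gt_three]
    exact (half_max_exp_sub_one_le_abs ha1).trans hreverse

theorem denominator_lower_bound :
    (∃ c > 0, ∀ v : ℝ,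
      c * max (Real.exp (-v / Real.sqrt 2) - 1) 1 ≤ ‖1 + Complex.exp (-(ω * v))‖) ∧
    ∀ v : ℝ, 1 + Complex.exp (-(ω * v)) ≠ 0 := by
  have bound (v : ℝ) :
      1 / 2 * max (Real.exp (-v / √2) - 1) 1 ≤ ‖1 + exp (-(ω * v))‖ := by
    rw [neg_omega_mul_ofReal]
    exact half_max_le_norm_one_add_exp_mul_one_add_I _
  refine ⟨⟨1 / 2, by norm_num, bound⟩, fun v hv => ?_⟩
  have := bound v
  rw [hv, norm_zero] at this
  linarith [le_max_right (Real.exp (-v / √2) - 1) 1]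
end
end
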